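/- arXiv:2602.06677 — 2 statements merged into one kernel-verified Lean document; each statement's English description precedes it below -/
import Mathlib

section
/- For n > 0 even, ∫_{−1}^{1} P_n(t) (1−t²)^{−1/4} dt = π Γ(3/4)² / (Γ(n/2+5/4) Γ(3/4−n/2) Γ(n/2+1) Γ(1/2−n/2)), where P_n is the Legendre polynomial of degree n. -/
open Real Polynomial Finset intervalIntegral MeasureTheory Set

/-- Legendre polynomial of degree `n`, via the Rodrigues formula. -/
noncomputable def legendreP (n : ℕ) : Polynomial ℝ :=
  ((1 : ℝ) / (2 ^ n * n.factorial)) • (Polynomial.derivative^[n] ((Polynomial.X ^ 2 - 1) ^ n))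





noncomputable def poch (x : ℝ) (n : ℕ) : ℝ := ∏ i ∈ Finset.range n, (x + i)

lemma poch_zero (x : ℝ) : poch x 0 = 1 := by simp [poch]

lemma poch_succ (x : ℝ) (n : ℕ) : poch x (n + 1) = poch x n * (x + n) := by
  simp [poch, Finset.prod_range_succ]

lemma poch_succ_left (x : ℝ) (n : ℕ) : poch x (n + 1) = x * poch (x + 1) n := by
  rw [poch, Finset.prod_range_succ', poch]
  push_cast
  rw [mul_comm]
  simp only [add_zero]
  congr 1
  exact Finset.prod_congr rfl fun i _ => by ring

lemma poch_add (x : ℝ) (a b : ℕ) : poch x (a + b) = poch x a * poch (x + a) b := by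
  induction b with
  | zero => simp [poch_zero]
  | succ b ih => rw [← Nat.add_assoc, poch_succ, ih, poch_succ]; push_cast; ring

lemma poch_pos {x : ℝ} (hx : 0 < x) (n : ℕ) : 0 < poch x n := by
  induction n with
  | zero => simp [poch_zero]
  | succ n ih => rw [poch_succ]; positivity

lemma poch_reflect (c : ℝ) (m : ℕ) : poch (c - m) m = (-1) ^ m * poch (1 - c) m := by
  rw [poch, poch, ← Finset.prod_range_reflect]
  rw [show ((-1:ℝ))^m = ∏ _i ∈ Finset.range m, (-1:ℝ) by simp, ← Finset.prod_mul_distrib]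
  refine Finset.prod_congr rfl fun i hi => ?_
  rw [Finset.mem_range] at hi
  have h1 : (↑(m - 1 - i) : ℝ) = (m:ℝ) - 1 - i := by
    have h2 : m - 1 - i = m - (1 + i) := by omega
    rw [h2, Nat.cast_sub (by omega)]; push_cast; ring
  rw [h1]; ring

/-- Chu–Vandermonde, polynomial form. -/
lemma chu (m : ℕ) : ∀ b c : ℝ,
    ∑ j ∈ Finset.range (m + 1), ((m.choose j : ℝ) * (-1) ^ j * poch b j * poch (c + j) (m - j))
      = poch (c - b) m := by
  induction m with
  | zero => intro b c; simp [poch_zero]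
  | succ m ih =>
    intro b c
    set g : ℕ → ℝ := fun j => (-1 : ℝ) ^ j * poch b j * poch (c + (j:ℝ)) (m + 1 - j) with hg
    have hsum : ∀ j, ((m+1).choose j : ℝ) * (-1) ^ j * poch b j * poch (c + j) (m + 1 - j)
        = ((m+1).choose j : ℝ) * g j := fun j => by rw [hg]; ring
    calc ∑ j ∈ Finset.range (m + 1 + 1),
          ((m+1).choose j : ℝ) * (-1) ^ j * poch b j * poch (c + j) (m + 1 - j)
        = ∑ j ∈ Finset.range (m + 2), ((m+1).choose j : ℝ) * g j := by
          exact Finset.sum_congr rfl fun j _ => hsum j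
      _ = ∑ j ∈ Finset.range (m + 1), (m.choose j : ℝ) * (g j + g (j+1)) := by
          rw [Finset.sum_range_succ' (fun j => ((m+1).choose j : ℝ) * g j) (m+1)]
          have e1 : ∀ j ∈ Finset.range (m+1),
              ((m+1).choose (j+1) : ℝ) * g (j+1)
                = (m.choose j : ℝ) * g (j+1) + (m.choose (j+1) : ℝ) * g (j+1) := by
            intro j _
            rw [Nat.choose_succ_succ]; push_cast; ring
          rw [Finset.sum_congr rfl e1, Finset.sum_add_distrib]
          have e2 : ∑ j ∈ Finset.range (m+1), (m.choose (j+1) : ℝ) * g (j+1)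
              + ((m+1).choose 0 : ℝ) * g 0
              = ∑ j ∈ Finset.range (m+1), (m.choose j : ℝ) * g j := by
            have := (Finset.sum_range_succ' (fun j => (m.choose j : ℝ) * g j) (m+1)).symm
            simp only [Nat.choose_zero_right, Nat.cast_one] at this ⊢
            rw [this, Finset.sum_range_succ]
            simp [Nat.choose_succ_self]
          rw [add_assoc, e2, ← Finset.sum_add_distrib]
          exact Finset.sum_congr rfl fun j _ => by ring
      _ = ∑ j ∈ Finset.range (m + 1),
            (c - b) * ((m.choose j : ℝ) * (-1) ^ j * poch b j * poch ((c+1) + j) (m - j)) := by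
          refine Finset.sum_congr rfl fun j hj => ?_
          rw [Finset.mem_range] at hj
          have h1 : m + 1 - j = (m - j) + 1 := by omega
          have h2 : m + 1 - (j + 1) = m - j := by omega
          rw [hg]
          simp only [h1, h2]
          rw [poch_succ_left (c + (j:ℝ)), poch_succ b j]
          push_cast
          have h3 : c + (j:ℝ) + 1 = (c + 1) + (j:ℝ) := by ring
          rw [h3]
          ring
      _ = (c - b) * poch ((c + 1) - b) m := by rw [← Finset.mul_sum, ih b (c+1)]
      _ = poch (c - b) (m + 1) := by
          rw [poch_succ_left]
          congr 1
          ring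
-- N4
lemma four_pow_poch_half (m : ℕ) : 4 ^ m * (m.factorial : ℝ) * poch (1/2) m = (2*m).factorial := by
  induction m with
  | zero => simp [poch_zero]
  | succ m ih =>
    have h2 : 2 * (m + 1) = (2*m) + 1 + 1 := by ring
    rw [h2, Nat.factorial_succ, Nat.factorial_succ, poch_succ, Nat.factorial_succ]
    push_cast
    rw [pow_succ]
    linear_combination (4*((m:ℝ)+1)*(1/2+(m:ℝ))) * ih

-- N7
lemma factorial_poch (a k : ℕ) : (a.factorial : ℝ) * poch (a + 1) k = (a + k).factorial := by
  induction k with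
  | zero => simp [poch_zero]
  | succ k ih =>
    rw [poch_succ, ← Nat.add_assoc, Nat.factorial_succ]
    push_cast
    linear_combination ((a:ℝ)+1+(k:ℝ)) * ih

-- N5
lemma poch_half_doubling (m j : ℕ) :
    4 ^ j * poch ((m:ℝ) + 1/2) j * poch ((m:ℝ) + 1) j = poch (2*(m:ℝ) + 1) (2*j) := by
  induction j with
  | zero => simp [poch_zero]
  | succ j ih =>
    have h2 : 2 * (j + 1) = (2*j) + 1 + 1 := by ring
    rw [h2, poch_succ, poch_succ, poch_succ, poch_succ]
    push_cast
    rw [pow_succ]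
    linear_combination (4*((m:ℝ)+1/2+(j:ℝ))*((m:ℝ)+1+(j:ℝ))) * ih

-- N6
lemma choose_id (m j : ℕ) (hj : j ≤ m) :
    ((2*m).choose (m+j) : ℝ) * m.factorial * (m+j).factorial
      = ((2*m).factorial : ℝ) * (m.choose j) * j.factorial := by
  have h1 := Nat.choose_mul_factorial_mul_factorial (show m + j ≤ 2*m by omega)
  have h2 := Nat.choose_mul_factorial_mul_factorial hj
  have h3 : 2*m - (m+j) = m - j := by omega
  rw [h3] at h1
  have h4 : ((2*m).choose (m+j) : ℝ) * ((m+j).factorial) * ((m-j).factorial) = (2*m).factorial := by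
    exact_mod_cast congrArg (Nat.cast : ℕ → ℝ) h1
  have h5 : ((m.choose j : ℝ)) * (j.factorial) * ((m-j).factorial) = m.factorial := by
    exact_mod_cast congrArg (Nat.cast : ℕ → ℝ) h2
  have hne : ((m-j).factorial : ℝ) ≠ 0 := by positivity
  linear_combination ((m.choose j : ℝ) * (j.factorial : ℝ)) * h4
    - (((2*m).choose (m+j) : ℝ) * ((m+j).factorial : ℝ)) * h5

-- Gamma shift
lemma Gamma_shift (m : ℕ) (x : ℝ) (hx : ∀ i : ℕ, i < m → x + i ≠ 0) :
    Real.Gamma (x + m) = poch x m * Real.Gamma x := by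
  induction m with
  | zero => simp [poch_zero]
  | succ m ih =>
    have h1 : x + (m+1 : ℕ) = (x + m) + 1 := by push_cast; ring
    rw [h1, Real.Gamma_add_one (hx m (by omega)), ih (fun i hi => hx i (by omega)), poch_succ]
    ring

-- D_j
lemma descFactorial_cast (m j : ℕ) :
    (((2*m+2*j).descFactorial (2*m) : ℕ) : ℝ) * (2*j).factorial = (2*m+2*j).factorial := by
  have := Nat.factorial_mul_descFactorial (show 2*m ≤ 2*m+2*j by omega)
  have h3 : 2*m+2*j - 2*m = 2*j := by omega
  rw [h3] at this
  exact_mod_cast congrArg (Nat.cast : ℕ → ℝ) (by rw [← this]; ring)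

lemma real_beta {a b : ℝ} (ha : 0 < a) (hb : 0 < b) :
    ∫ x in (0:ℝ)..1, x ^ (a - 1) * (1 - x) ^ (b - 1)
      = Real.Gamma a * Real.Gamma b / Real.Gamma (a + b) := by
  have key : Complex.betaIntegral a b = ((∫ x in (0:ℝ)..1, x ^ (a - 1) * (1 - x) ^ (b - 1) : ℝ) : ℂ) := by
    rw [Complex.betaIntegral, ← intervalIntegral.integral_ofReal]
    refine intervalIntegral.integral_congr fun x hx => ?_
    rw [Set.uIcc_of_le (by norm_num : (0:ℝ) ≤ 1)] at hx
    obtain ⟨hx0, hx1⟩ := hx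
    rw [show ((a:ℂ) - 1) = ((a - 1 : ℝ) : ℂ) by push_cast; ring,
      show ((b:ℂ) - 1) = ((b - 1 : ℝ) : ℂ) by push_cast; ring,
      show ((1:ℂ) - (x:ℝ)) = ((1 - x : ℝ) : ℂ) by push_cast; ring,
      ← Complex.ofReal_cpow hx0, ← Complex.ofReal_cpow (by linarith)]
    push_cast
    ring
  have hG := Complex.Gamma_mul_Gamma_eq_betaIntegral
    (by simpa using ha : 0 < (a:ℂ).re) (by simpa using hb : 0 < (b:ℂ).re)
  rw [key] at hG
  have h2 : ((Real.Gamma a * Real.Gamma b : ℝ) : ℂ)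
      = ((Real.Gamma (a+b) * ∫ x in (0:ℝ)..1, x ^ (a - 1) * (1 - x) ^ (b - 1) : ℝ) : ℂ) := by
    push_cast
    rw [← Complex.Gamma_ofReal, ← Complex.Gamma_ofReal, ← Complex.Gamma_ofReal] at *
    simpa using hG
  have h3 := Complex.ofReal_injective h2
  have hne : Real.Gamma (a+b) ≠ 0 := (Real.Gamma_pos_of_pos (by linarith)).ne'
  field_simp
  linarith [h3]
lemma Iw1 : IntervalIntegrable (fun t : ℝ => (1 - t) ^ (-(1/4) : ℝ)) volume 0 1 := by
  have h := intervalIntegral.intervalIntegrable_rpow' (a := 0) (b := 1)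
    (show (-1:ℝ) < -(1/4) by norm_num)
  simpa using (h.comp_sub_left 1).symm

lemma Iwk (k : ℕ) : IntervalIntegrable (fun t : ℝ => t ^ k * (1 - t^2) ^ (-(1/4) : ℝ)) volume 0 1 := by
  apply Iw1.mono_fun
  · rw [Set.uIoc_of_le (by norm_num : (0:ℝ) ≤ 1),
      ← Measure.restrict_congr_set Ioo_ae_eq_Ioc]
    refine ContinuousOn.aestronglyMeasurable ?_ measurableSet_Ioo
    refine ContinuousOn.mul (continuousOn_pow k) ?_
    refine ContinuousOn.rpow_const ((continuousOn_const).sub (continuousOn_pow 2)) ?_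
    intro x hx
    obtain ⟨hx0, hx1⟩ := hx
    left
    nlinarith
  · rw [Set.uIoc_of_le (by norm_num : (0:ℝ) ≤ 1)]
    rw [Filter.EventuallyLE, ae_restrict_iff' measurableSet_Ioc]
    refine Filter.Eventually.of_forall fun t ht => ?_
    obtain ⟨ht0, ht1⟩ := ht
    simp only [Real.norm_eq_abs]
    have h1 : 0 ≤ 1 - t^2 := by nlinarith
    have h2 : 0 ≤ 1 - t := by linarith
    rw [abs_of_nonneg (by positivity), abs_of_nonneg (by positivity)]
    have htk : t ^ k ≤ 1 := pow_le_one₀ ht0.le ht1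
    have hmain : (1 - t^2) ^ (-(1/4) : ℝ) ≤ (1 - t) ^ (-(1/4) : ℝ) := by
      rcases eq_or_lt_of_le ht1 with h | h
      · subst h; norm_num
      · exact Real.rpow_le_rpow_of_nonpos (by linarith) (by nlinarith) (by norm_num)
    calc t ^ k * (1 - t^2) ^ (-(1/4) : ℝ) ≤ 1 * (1 - t^2) ^ (-(1/4) : ℝ) := by
          apply mul_le_mul_of_nonneg_right htk (by positivity)
      _ = (1 - t^2) ^ (-(1/4) : ℝ) := one_mul _
      _ ≤ (1 - t) ^ (-(1/4) : ℝ) := hmain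

lemma Iwk_neg (k : ℕ) :
    IntervalIntegrable (fun t : ℝ => t ^ k * (1 - t^2) ^ (-(1/4) : ℝ)) volume (-1) 0 := by
  have h1 : IntervalIntegrable (fun t : ℝ => (-1:ℝ)^k * (t ^ k * (1 - t^2) ^ (-(1/4) : ℝ))) volume 0 1 :=
    (Iwk k).const_mul _
  have h2 : (fun t : ℝ => (fun s : ℝ => s ^ k * (1 - s^2) ^ (-(1/4) : ℝ)) (-t))
      = fun t : ℝ => (-1:ℝ)^k * (t ^ k * (1 - t^2) ^ (-(1/4) : ℝ)) := by
    funext t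
    show (-t) ^ k * (1 - (-t)^2) ^ (-(1/4) : ℝ) = _
    rw [neg_sq, neg_pow, mul_assoc]
  have h3 : IntervalIntegrable (fun t : ℝ => (fun s : ℝ => s ^ k * (1 - s^2) ^ (-(1/4) : ℝ)) (-t))
      volume 1 0 := by
    rw [h2]
    exact h1.symm
  have h4 := (IntervalIntegrable.iff_comp_neg
    (f := fun s : ℝ => s ^ k * (1 - s^2) ^ (-(1/4) : ℝ)) (a := -1) (b := 0))
  rw [neg_neg, neg_zero] at h4
  exact h4.mpr h3

lemma Iwk_full (k : ℕ) :
    IntervalIntegrable (fun t : ℝ => t ^ k * (1 - t^2) ^ (-(1/4) : ℝ)) volume (-1) 1 :=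
  (Iwk_neg k).trans (Iwk k)

lemma sq_image : (fun t : ℝ => t^2) '' Set.Ioo 0 1 = Set.Ioo 0 1 := by
  ext y
  constructor
  · rintro ⟨x, ⟨hx0, hx1⟩, rfl⟩
    constructor
    · positivity
    · show x^2 < 1
      nlinarith
  · rintro ⟨hy0, hy1⟩
    refine ⟨Real.sqrt y, ⟨Real.sqrt_pos.mpr hy0, ?_⟩, Real.sq_sqrt hy0.le⟩
    rw [show (1:ℝ) = Real.sqrt 1 by simp]
    exact Real.sqrt_lt_sqrt hy0.le hy1

lemma moment (j : ℕ) :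
    ∫ t in (-1:ℝ)..1, t ^ (2*j) * (1 - t^2) ^ (-(1/4) : ℝ)
      = Real.Gamma ((j:ℝ) + 1/2) * Real.Gamma (3/4) / Real.Gamma ((j:ℝ) + 5/4) := by
  have hsplit : ∫ t in (-1:ℝ)..1, t ^ (2*j) * (1 - t^2) ^ (-(1/4) : ℝ)
      = 2 * ∫ t in (0:ℝ)..1, t ^ (2*j) * (1 - t^2) ^ (-(1/4) : ℝ) := by
    rw [← intervalIntegral.integral_add_adjacent_intervals (Iwk_neg (2*j)) (Iwk (2*j))]
    have hneg : ∫ t in (-1:ℝ)..0, t ^ (2*j) * (1 - t^2) ^ (-(1/4) : ℝ)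
        = ∫ t in (0:ℝ)..1, t ^ (2*j) * (1 - t^2) ^ (-(1/4) : ℝ) := by
      have h := intervalIntegral.integral_comp_neg
        (f := fun t : ℝ => t ^ (2*j) * (1 - t^2) ^ (-(1/4) : ℝ)) (a := 0) (b := 1)
      rw [neg_zero] at h
      rw [← h]
      refine intervalIntegral.integral_congr fun x _ => ?_
      show (-x) ^ (2*j) * (1 - (-x)^2) ^ (-(1/4) : ℝ) = _
      rw [neg_sq, pow_mul, neg_sq, ← pow_mul]
    rw [hneg]; ring
  -- substitution u = t^2 on (0,1)
  have hsub : ∫ x in Set.Ioo (0:ℝ) 1, x ^ ((j:ℝ) - 1/2) * (1-x) ^ (-(1/4):ℝ)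
      = ∫ t in Set.Ioo (0:ℝ) 1, |2*t| • ((t^2) ^ ((j:ℝ) - 1/2) * (1-t^2) ^ (-(1/4):ℝ)) := by
    conv_lhs => rw [← sq_image]
    apply MeasureTheory.integral_image_eq_integral_abs_deriv_smul measurableSet_Ioo
    · intro x _
      simpa using (hasDerivAt_pow 2 x).hasDerivWithinAt
    · intro x hx y hy hxy
      simp only at hxy
      calc x = Real.sqrt (x^2) := (Real.sqrt_sq hx.1.le).symm
        _ = Real.sqrt (y^2) := by rw [hxy]
        _ = y := Real.sqrt_sq hy.1.le
  have hRHS : ∫ t in Set.Ioo (0:ℝ) 1, |2*t| • ((t^2) ^ ((j:ℝ) - 1/2) * (1-t^2) ^ (-(1/4):ℝ))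
      = 2 * ∫ t in Set.Ioo (0:ℝ) 1, t ^ (2*j) * (1 - t^2) ^ (-(1/4) : ℝ) := by
    rw [← MeasureTheory.integral_const_mul]
    refine MeasureTheory.setIntegral_congr_fun measurableSet_Ioo fun t ht => ?_
    obtain ⟨ht0, ht1⟩ := ht
    rw [abs_of_pos (by linarith), smul_eq_mul]
    have e1 : ((t^2:ℝ)) ^ ((j:ℝ) - 1/2) = t ^ (2*(j:ℝ) - 1) := by
      rw [← Real.rpow_natCast t 2, ← Real.rpow_mul ht0.le]
      congr 1
      push_cast
      ring
    rw [e1]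
    calc 2*t*(t ^ (2*(j:ℝ)-1) * (1-t^2) ^ (-(1/4):ℝ))
        = 2*((t^(1:ℝ) * t^(2*(j:ℝ)-1)) * (1-t^2) ^ (-(1/4):ℝ)) := by
          rw [Real.rpow_one]; ring
      _ = 2*(t^(((2*j:ℕ)):ℝ) * (1-t^2) ^ (-(1/4):ℝ)) := by
          rw [← Real.rpow_add ht0]
          congr 2
          push_cast
          ring
      _ = 2 * (t ^ (2*j) * (1 - t^2) ^ (-(1/4) : ℝ)) := by
          rw [Real.rpow_natCast]
  have hbeta := real_beta (a := (j:ℝ) + 1/2) (b := 3/4) (by positivity) (by norm_num)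
  rw [hsplit]
  have h01 : ∫ t in (0:ℝ)..1, t ^ (2*j) * (1 - t^2) ^ (-(1/4) : ℝ)
      = ∫ t in Set.Ioo (0:ℝ) 1, t ^ (2*j) * (1 - t^2) ^ (-(1/4) : ℝ) := by
    rw [intervalIntegral.integral_of_le (by norm_num : (0:ℝ) ≤ 1),
      MeasureTheory.integral_Ioc_eq_integral_Ioo]
  have h01' : ∫ x in (0:ℝ)..1, x ^ (((j:ℝ) + 1/2) - 1) * (1-x) ^ ((3/4:ℝ) - 1)
      = ∫ x in Set.Ioo (0:ℝ) 1, x ^ ((j:ℝ) - 1/2) * (1-x) ^ (-(1/4):ℝ) := by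
    rw [intervalIntegral.integral_of_le (by norm_num : (0:ℝ) ≤ 1),
      MeasureTheory.integral_Ioc_eq_integral_Ioo]
    refine MeasureTheory.setIntegral_congr_fun measurableSet_Ioo fun x _ => by
      rw [show (j:ℝ) + 1/2 - 1 = (j:ℝ) - 1/2 by ring, show (3/4:ℝ) - 1 = -(1/4) by norm_num]
  rw [h01'] at hbeta
  rw [h01, ← hRHS, ← hsub, hbeta]
  rw [show (j:ℝ) + 1/2 + 3/4 = (j:ℝ) + 5/4 by ring]


lemma legendre_eval (n : ℕ) (t : ℝ) :
    (legendreP n).eval t = (1 / (2^n * n.factorial) : ℝ) *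
      ∑ k ∈ Finset.range (n+1),
        (-1:ℝ)^(k+n) * (n.choose k) * ((2*k).descFactorial n) * t^(2*k - n) := by
  rw [legendreP, eval_smul, smul_eq_mul]
  congr 1
  have hexp : ((Polynomial.X ^ 2 - 1 : Polynomial ℝ) ^ n)
      = ∑ k ∈ Finset.range (n+1),
          Polynomial.C ((-1:ℝ)^(k+n) * (n.choose k)) * Polynomial.X^(2*k) := by
    rw [sub_pow]
    refine Finset.sum_congr rfl fun k _ => ?_
    rw [one_pow, ← pow_mul]
    simp only [map_mul, map_pow, map_neg, map_one, Polynomial.C_eq_natCast]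
    push_cast
    ring
  rw [hexp, Polynomial.iterate_derivative_sum, Polynomial.eval_finset_sum]
  refine Finset.sum_congr rfl fun k _ => ?_
  rw [Polynomial.iterate_derivative_C_mul, Polynomial.iterate_derivative_X_pow_eq_natCast_mul]
  simp only [Polynomial.eval_mul, Polynomial.eval_C, Polynomial.eval_natCast, Polynomial.eval_pow,
    Polynomial.eval_X]
  ring
lemma star_id (m j : ℕ) (hj : j ≤ m) :
    ((2*m).choose (m+j) : ℝ) * ((2*m+2*j).descFactorial (2*m)) * poch (1/2) j
        * (m.factorial:ℝ)^2
      = ((2*m).factorial:ℝ)^2 * (m.choose j) * poch ((m:ℝ) + 1/2) j := by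
  have h1 := descFactorial_cast m j
  have h2 := four_pow_poch_half j
  have h3 := poch_half_doubling m j
  have h4 := factorial_poch m j
  have h5 := factorial_poch (2*m) (2*j)
  have hc : ((2*m:ℕ):ℝ) + 1 = 2*(m:ℝ) + 1 := by push_cast; ring
  rw [hc] at h5
  have h6 := choose_id m j hj
  set c2 := ((2*m).choose (m+j) : ℝ)
  set c1 := ((m).choose j : ℝ)
  set D := (((2*m+2*j).descFactorial (2*m) : ℕ) : ℝ)
  set Fm := (m.factorial : ℝ)
  set F2m := ((2*m).factorial : ℝ)
  set Fj := (j.factorial : ℝ)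
  set F2j := ((2*j).factorial : ℝ)
  set Fmj := ((m+j).factorial : ℝ)
  set T2 := ((2*m+2*j).factorial : ℝ)
  set P1 := poch (1/2) j
  set P2 := poch ((m:ℝ) + 1/2) j
  set P3 := poch ((m:ℝ) + 1) j
  set P4 := poch (2*(m:ℝ) + 1) (2*j)
  have hZ : (4:ℝ)^j * Fj * ((4:ℝ)^j * P3 * F2j) ≠ 0 := by
    have hP3 : 0 < P3 := poch_pos (by positivity) j
    have : (0:ℝ) < Fj := by positivity
    have : (0:ℝ) < F2j := by positivity
    positivity
  apply mul_right_cancel₀ hZ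
  calc c2 * D * P1 * Fm^2 * ((4:ℝ)^j * Fj * ((4:ℝ)^j * P3 * F2j))
      = c2 * D * Fm^2 * ((4:ℝ)^j * P3 * F2j) * F2j := by
        linear_combination (c2 * D * Fm^2 * ((4:ℝ)^j * P3 * F2j)) * h2
    _ = c2 * T2 * Fm^2 * ((4:ℝ)^j * P3) * F2j := by
        linear_combination (c2 * Fm^2 * (4:ℝ)^j * P3 * F2j) * h1
    _ = c2 * T2 * Fm * Fmj * (4:ℝ)^j * F2j := by
        linear_combination (c2 * T2 * Fm * (4:ℝ)^j * F2j) * h4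
    _ = F2m * c1 * Fj * T2 * (4:ℝ)^j * F2j := by
        linear_combination (T2 * (4:ℝ)^j * F2j) * h6
    _ = F2m^2 * c1 * P2 * ((4:ℝ)^j * Fj * ((4:ℝ)^j * P3 * F2j)) := by
        have s1 : F2m^2 * c1 * P2 * ((4:ℝ)^j * Fj * ((4:ℝ)^j * P3 * F2j))
            = F2m^2 * c1 * Fj * F2j * P4 * (4:ℝ)^j := by
          linear_combination (F2m^2 * c1 * Fj * F2j * (4:ℝ)^j) * h3
        have s2 : F2m^2 * c1 * Fj * F2j * P4 * (4:ℝ)^j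
            = F2m * c1 * Fj * F2j * T2 * (4:ℝ)^j := by
          linear_combination (F2m * c1 * Fj * F2j * (4:ℝ)^j) * h5
        rw [s1, s2]
        ring

lemma term_id (m j : ℕ) (hj : j ≤ m) :
    (-1:ℝ)^(m+j) * ((2*m).choose (m+j)) * ((2*m+2*j).descFactorial (2*m))
        * (Real.Gamma ((j:ℝ)+1/2) * Real.Gamma (3/4) / Real.Gamma ((j:ℝ)+5/4))
      = ((-1:ℝ)^m * (((2*m).factorial:ℝ)^2 * Real.Gamma (1/2) * Real.Gamma (3/4)
            / ((m.factorial:ℝ)^2 * poch (5/4) m * Real.Gamma (5/4))))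
        * ((m.choose j : ℝ) * (-1)^j * poch ((m:ℝ)+1/2) j * poch (5/4 + (j:ℝ)) (m-j)) := by
  have hG1 : Real.Gamma ((j:ℝ)+1/2) = poch (1/2) j * Real.Gamma (1/2) := by
    have := Gamma_shift j (1/2) (fun i _ => by positivity)
    rw [show (1/2 + (j:ℝ)) = (j:ℝ)+1/2 by ring] at this
    exact this
  have hG2 : Real.Gamma ((j:ℝ)+5/4) = poch (5/4) j * Real.Gamma (5/4) := by
    have := Gamma_shift j (5/4) (fun i _ => by positivity)
    rw [show (5/4 + (j:ℝ)) = (j:ℝ)+5/4 by ring] at this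
    exact this
  have hpm : poch (5/4) m = poch (5/4) j * poch (5/4 + (j:ℝ)) (m-j) := by
    have := poch_add (5/4) j (m-j)
    rw [show j + (m-j) = m from by omega] at this
    exact this
  have hc1 : ((m.choose j : ℕ) : ℝ) ≠ 0 := by
    exact_mod_cast (Nat.choose_pos hj).ne'
  have hF2m : (((2*m).factorial : ℕ) : ℝ) ≠ 0 := by positivity
  have pstar : poch ((m:ℝ)+1/2) j
      = ((2*m).choose (m+j) : ℝ) * ((2*m+2*j).descFactorial (2*m)) * poch (1/2) j
          * (m.factorial:ℝ)^2 / (((2*m).factorial:ℝ)^2 * (m.choose j)) := by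
    rw [eq_div_iff (by exact mul_ne_zero (pow_ne_zero 2 hF2m) hc1)]
    linear_combination (star_id m j hj).symm
  have hP4j : (0:ℝ) < poch (5/4) j := poch_pos (by norm_num) j
  have hP4mj : (0:ℝ) < poch (5/4 + (j:ℝ)) (m-j) := poch_pos (by positivity) (m-j)
  have hG54 : (0:ℝ) < Real.Gamma (5/4) := Real.Gamma_pos_of_pos (by norm_num)
  have hFm : ((m.factorial : ℕ) : ℝ) ≠ 0 := by positivity
  rw [hG1, hG2, hpm, pstar]
  generalize ((2*m).choose (m+j) : ℝ) = A at *
  generalize (((2*m+2*j).descFactorial (2*m) : ℕ) : ℝ) = D at *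
  generalize hs1 : ((m.choose j : ℕ) : ℝ) = c1 at *
  generalize hs2 : (((2*m).factorial : ℕ) : ℝ) = F2m at *
  generalize hs3 : ((m.factorial : ℕ) : ℝ) = Fm at *
  generalize hs4 : poch (1/2) j = P1 at *
  generalize hs5 : poch (5/4) j = Pj at *
  generalize hs6 : poch (5/4 + (j:ℝ)) (m-j) = Pmj at *
  field_simp [hc1, hF2m, hFm, hP4j.ne', hP4mj.ne', hG54.ne']
  ring

theorem stmt3 (n : ℕ) (hn : 0 < n) (heven : Even n) :
    ∫ t in (-1:ℝ)..1, (legendreP n).eval t * (1 - t ^ 2) ^ (-(1/4) : ℝ) =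
      Real.pi * Real.Gamma (3/4) ^ 2 /
        (Real.Gamma ((n:ℝ)/2 + 5/4) * Real.Gamma (3/4 - (n:ℝ)/2) *
          Real.Gamma ((n:ℝ)/2 + 1) * Real.Gamma (1/2 - (n:ℝ)/2)) := by
  obtain ⟨m, rfl⟩ : ∃ m, n = 2*m := by
    obtain ⟨r, hr⟩ := heven; exact ⟨r, by omega⟩
  have hm : 0 < m := by omega
  -- Step A : expand the polynomial and integrate term by term
  have expand : (∫ t in (-1:ℝ)..1, (legendreP (2*m)).eval t * (1 - t^2) ^ (-(1/4):ℝ))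
      = (1/(2^(2*m) * (2*m).factorial) : ℝ) * ∑ k ∈ Finset.range (2*m+1),
          ((-1:ℝ)^(k+2*m) * ((2*m).choose k) * ((2*k).descFactorial (2*m)))
            * ∫ t in (-1:ℝ)..1, t^(2*k-2*m) * (1-t^2)^(-(1/4):ℝ) := by
    have hfun : Set.EqOn (fun t : ℝ => (legendreP (2*m)).eval t * (1-t^2)^(-(1/4):ℝ))
        (fun t : ℝ => ∑ k ∈ Finset.range (2*m+1),
          (1/(2^(2*m) * (2*m).factorial) : ℝ)
            * ((-1:ℝ)^(k+2*m) * ((2*m).choose k) * ((2*k).descFactorial (2*m)))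
            * (t^(2*k-2*m) * (1-t^2)^(-(1/4):ℝ))) (Set.uIcc (-1) 1) := by
      intro t _
      show (legendreP (2*m)).eval t * (1-t^2)^(-(1/4):ℝ) = _
      rw [legendre_eval (2*m) t]
      rw [Finset.mul_sum, Finset.sum_mul]
      exact Finset.sum_congr rfl fun k _ => by ring
    rw [intervalIntegral.integral_congr hfun, intervalIntegral.integral_finset_sum
      (fun k _ => ((Iwk_full (2*k-2*m)).const_mul _)), Finset.mul_sum]
    exact Finset.sum_congr rfl fun k _ => by rw [intervalIntegral.integral_const_mul]; ring
  rw [expand]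
  -- Step B : the first m terms vanish; reindex the rest
  rw [show 2*m+1 = m + (m+1) from by ring, Finset.sum_range_add]
  have hz : ∑ k ∈ Finset.range m,
      ((-1:ℝ)^(k+2*m) * ((2*m).choose k) * ((2*k).descFactorial (2*m)))
        * ∫ t in (-1:ℝ)..1, t^(2*k-2*m) * (1-t^2)^(-(1/4):ℝ) = 0 := by
    refine Finset.sum_eq_zero fun k hk => ?_
    rw [Finset.mem_range] at hk
    rw [Nat.descFactorial_eq_zero_iff_lt.mpr (by omega)]
    simp
  rw [hz, zero_add]
  -- Step C : per-term evaluation via the moment integral and the Gamma identities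
  have hterm : ∀ j ∈ Finset.range (m+1),
      ((-1:ℝ)^((m+j)+2*m) * ((2*m).choose (m+j)) * ((2*(m+j)).descFactorial (2*m)))
        * (∫ t in (-1:ℝ)..1, t^(2*(m+j)-2*m) * (1-t^2)^(-(1/4):ℝ))
      = ((-1:ℝ)^m * (((2*m).factorial:ℝ)^2 * Real.Gamma (1/2) * Real.Gamma (3/4)
            / ((m.factorial:ℝ)^2 * poch (5/4) m * Real.Gamma (5/4))))
        * ((m.choose j : ℝ) * (-1)^j * poch ((m:ℝ)+1/2) j * poch (5/4 + (j:ℝ)) (m-j)) := by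
    intro j hj
    rw [Finset.mem_range] at hj
    rw [show 2*(m+j)-2*m = 2*j from by omega, show (2*(m+j)) = 2*m+2*j from by ring, moment j]
    rw [show (-1:ℝ)^((m+j)+2*m) = (-1)^(m+j) from by
      rw [pow_add, (show Even (2*m) from ⟨m, by ring⟩).neg_one_pow, mul_one]]
    exact term_id m j (by omega)
  rw [Finset.sum_congr rfl hterm, ← Finset.mul_sum, chu m ((m:ℝ)+1/2) (5/4)]
  rw [show (5/4 - ((m:ℝ)+1/2)) = 3/4 - (m:ℝ) from by ring]
  -- Step D : compute the right-hand side
  have hc2 : ((2*m:ℕ):ℝ)/2 = (m:ℝ) := by push_cast; ring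
  rw [hc2]
  have hG54 : (0:ℝ) < Real.Gamma (5/4) := Real.Gamma_pos_of_pos (by norm_num)
  have hG34 : (0:ℝ) < Real.Gamma (3/4) := Real.Gamma_pos_of_pos (by norm_num)
  have hG12 : (0:ℝ) < Real.Gamma (1/2) := Real.Gamma_pos_of_pos (by norm_num)
  have hP54 : (0:ℝ) < poch (5/4) m := poch_pos (by norm_num) m
  have hP12 : (0:ℝ) < poch (1/2) m := poch_pos (by norm_num) m
  have f1 : Real.Gamma ((m:ℝ)+5/4) = poch (5/4) m * Real.Gamma (5/4) := by
    have := Gamma_shift m (5/4) (fun i _ => by positivity)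
    rw [show (5/4 + (m:ℝ)) = (m:ℝ)+5/4 from by ring] at this
    exact this
  have f2 : Real.Gamma ((m:ℝ)+1) = (m.factorial : ℝ) := Real.Gamma_nat_eq_factorial m
  -- Gamma (3/4 - m)
  have hx34 : ∀ i : ℕ, i < m → (3/4 - (m:ℝ)) + i ≠ 0 := by
    intro i hi
    have : (i:ℝ) ≤ (m:ℝ) - 1 := by
      have : (i:ℝ) + 1 ≤ (m:ℝ) := by exact_mod_cast Nat.succ_le_of_lt hi
      linarith
    intro h
    linarith
  have base34 := Gamma_shift m (3/4 - (m:ℝ)) hx34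
  rw [show (3/4 - (m:ℝ)) + (m:ℝ) = 3/4 from by ring] at base34
  have hP34ne : poch (3/4 - (m:ℝ)) m ≠ 0 := by
    intro h
    rw [h, zero_mul] at base34
    exact hG34.ne' base34
  have hG34m_ne : Real.Gamma (3/4 - (m:ℝ)) ≠ 0 := by
    intro h
    rw [h, mul_zero] at base34
    exact hG34.ne' base34
  have f3 : Real.Gamma (3/4 - (m:ℝ)) = Real.Gamma (3/4) / poch (3/4 - (m:ℝ)) m := by
    rw [eq_div_iff hP34ne]
    linear_combination -base34
  -- Gamma (1/2 - m)
  have hx12 : ∀ i : ℕ, i < m → (1/2 - (m:ℝ)) + i ≠ 0 := by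
    intro i hi
    have : (i:ℝ) ≤ (m:ℝ) - 1 := by
      have : (i:ℝ) + 1 ≤ (m:ℝ) := by exact_mod_cast Nat.succ_le_of_lt hi
      linarith
    intro h
    linarith
  have base12 := Gamma_shift m (1/2 - (m:ℝ)) hx12
  rw [show (1/2 - (m:ℝ)) + (m:ℝ) = 1/2 from by ring] at base12
  rw [poch_reflect (1/2) m, show (1:ℝ) - 1/2 = 1/2 from by norm_num] at base12
  have hneg : ((-1:ℝ))^m ≠ 0 := by
    intro h
    have := pow_eq_zero_iff (n := m) (by omega) |>.mp h
    norm_num at this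
  have f4 : Real.Gamma (1/2 - (m:ℝ)) = Real.Gamma (1/2) / ((-1:ℝ)^m * poch (1/2) m) := by
    rw [eq_div_iff (mul_ne_zero hneg hP12.ne')]
    linear_combination -base12
  have hpi : Real.pi = Real.Gamma (1/2) ^ 2 := by
    rw [Real.Gamma_one_half_eq, Real.sq_sqrt Real.pi_pos.le]
  have f6 : ((2*m).factorial : ℝ) = 4^m * (m.factorial : ℝ) * poch (1/2) m :=
    (four_pow_poch_half m).symm
  have h2pow : (2:ℝ)^(2*m) = 4^m := by rw [pow_mul]; norm_num
  rw [f1, f2, f3, f4, hpi, f6, h2pow]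
  have hFm : ((m.factorial : ℕ) : ℝ) ≠ 0 := by positivity
  have h4m : ((4:ℝ))^m ≠ 0 := by positivity
  field_simp
end

section
/- Suppose h : [−1,1] → ℝ satisfies |h(x)| ≤ 1 for all x and (1−x²)^{1/4}|h(x)| ≤ 12(2n+1)^{−1/4} for all x ∈ (−1,1), where n > 1 is an integer. Then (1/π)∫_{−1}^1 h(x)² (1−x²)^{−1/2} dx ≤ 151 ln(2n+1) / √(2n+1). -/
open Real MeasureTheory intervalIntegral Set

set_option maxHeartbeats 2000000 in
theorem stmt11 (n : ℕ) (hn : 1 < n) (h : ℝ → ℝ)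
    (h1 : ∀ x ∈ Set.Icc (-1 : ℝ) 1, |h x| ≤ 1)
    (h2 : ∀ x ∈ Set.Ioo (-1 : ℝ) 1,
      (1 - x ^ 2) ^ ((1/4 : ℝ)) * |h x| ≤ 12 * (2 * (n:ℝ) + 1) ^ (-(1/4) : ℝ)) :
    (1 / Real.pi) * ∫ x in (-1:ℝ)..1, (h x) ^ 2 * (1 - x ^ 2) ^ (-(1/2) : ℝ) ≤
      151 * Real.log (2 * (n:ℝ) + 1) / Real.sqrt (2 * (n:ℝ) + 1) := by
  set c : ℝ := 2 * (n:ℝ) + 1 with hc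
  set a : ℝ := 1 - 1/(n:ℝ) with ha
  set F : ℝ → ℝ := fun x => (h x) ^ 2 * (1 - x ^ 2) ^ (-(1/2) : ℝ) with hF
  clear_value c a F
  have hn2 : (2:ℝ) ≤ (n:ℝ) := by exact_mod_cast hn
  have hn0 : (0:ℝ) < (n:ℝ) := by linarith
  have hinv : (0:ℝ) < 1/(n:ℝ) := by positivity
  have hinv2 : 1/(n:ℝ) ≤ 1/2 := by
    rw [div_le_div_iff₀ hn0 (by norm_num)]; linarith
  have hc5 : (5:ℝ) ≤ c := by rw [hc]; linarith
  have hc0 : (0:ℝ) < c := by linarith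
  have ha1 : a < 1 := by rw [ha]; linarith
  have ha2 : (1:ℝ)/2 ≤ a := by rw [ha]; linarith
  have hLn : (1:ℝ) ≤ Real.log c := by
    rw [Real.le_log_iff_exp_le hc0]
    have := Real.exp_one_lt_d9
    linarith
  have hLn0 : (0:ℝ) ≤ Real.log c := by linarith
  have hs0 : (0:ℝ) < Real.sqrt c := Real.sqrt_pos.mpr hc0
  have hRHS0 : (0:ℝ) ≤ 151 * Real.log c / Real.sqrt c := by positivity
  by_cases hint : IntervalIntegrable F volume (-1) 1
  · -- subinterval integrability
    have hsub1 : IntervalIntegrable F volume (-1) (-a) := by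
      refine hint.mono_set (Set.uIcc_subset_uIcc ?_ ?_) <;>
        · rw [Set.uIcc_of_le (by norm_num : (-1:ℝ) ≤ 1), Set.mem_Icc]
          constructor <;> linarith
    have hsub2 : IntervalIntegrable F volume (-a) a := by
      refine hint.mono_set (Set.uIcc_subset_uIcc ?_ ?_) <;>
        · rw [Set.uIcc_of_le (by norm_num : (-1:ℝ) ≤ 1), Set.mem_Icc]
          constructor <;> linarith
    have hsub3 : IntervalIntegrable F volume a 1 := by
      refine hint.mono_set (Set.uIcc_subset_uIcc ?_ ?_) <;>
        · rw [Set.uIcc_of_le (by norm_num : (-1:ℝ) ≤ 1), Set.mem_Icc]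
          constructor <;> linarith
    have hsplit : (∫ x in (-1:ℝ)..1, F x) =
        (∫ x in (-1:ℝ)..(-a), F x) + (∫ x in (-a:ℝ)..a, F x) + (∫ x in (a:ℝ)..1, F x) := by
      rw [integral_add_adjacent_intervals hsub1 hsub2,
        integral_add_adjacent_intervals (hsub1.trans hsub2) hsub3]
    -- right strip integral
    have hrint : IntervalIntegrable (fun x : ℝ => (1 - x) ^ (-(1/2) : ℝ)) volume a 1 := by
      have h0 : IntervalIntegrable (fun y : ℝ => y ^ (-(1/2) : ℝ)) volume (1 - a) (1 - 1) :=
        intervalIntegrable_rpow' (by norm_num)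
      simpa using h0.comp_sub_left 1
    have hrval : (∫ x in (a:ℝ)..1, (1 - x) ^ (-(1/2) : ℝ)) = 2 * (1/(n:ℝ)) ^ ((1/2) : ℝ) := by
      have e1 := intervalIntegral.integral_comp_sub_left (a := a) (b := 1)
        (fun y : ℝ => y ^ (-(1/2) : ℝ)) 1
      beta_reduce at e1
      rw [e1, integral_rpow (Or.inl (by norm_num))]
      rw [show (1:ℝ) - 1 = 0 by norm_num, Real.zero_rpow (by norm_num : (-(1/2):ℝ) + 1 ≠ 0)]
      rw [show (1:ℝ) - a = 1/(n:ℝ) by rw [ha]; ring]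
      norm_num
      ring
    -- left strip integral
    have hlint : IntervalIntegrable (fun x : ℝ => (x + 1) ^ (-(1/2) : ℝ)) volume (-1) (-a) := by
      have h0 : IntervalIntegrable (fun y : ℝ => y ^ (-(1/2) : ℝ)) volume 0 (1 - a) :=
        intervalIntegrable_rpow' (by norm_num)
      have h1' := h0.comp_add_right 1
      have e1 : (0:ℝ) - 1 = -1 := by norm_num
      have e2 : (1:ℝ) - a - 1 = -a := by ring
      rw [e1, e2] at h1'
      exact h1'
    have hlval : (∫ x in (-1:ℝ)..(-a), (x + 1) ^ (-(1/2) : ℝ)) = 2 * (1/(n:ℝ)) ^ ((1/2) : ℝ) := by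
      have e1 := intervalIntegral.integral_comp_add_right (a := (-1:ℝ)) (b := -a)
        (fun y : ℝ => y ^ (-(1/2) : ℝ)) 1
      beta_reduce at e1
      rw [e1, show (-1:ℝ) + 1 = 0 by norm_num, show -a + 1 = 1/(n:ℝ) by rw [ha]; ring,
        integral_rpow (Or.inl (by norm_num))]
      rw [Real.zero_rpow (by norm_num : (-(1/2):ℝ) + 1 ≠ 0)]
      norm_num
      ring
    -- bulk integral
    have hmid_ne : ∀ x ∈ Set.uIcc (-a) a, 1 - x ^ 2 ≠ 0 := by
      intro x hx
      rw [Set.uIcc_of_le (by linarith : -a ≤ a)] at hx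
      have h1x : -1 < x := by have := hx.1; linarith
      have h2x : x < 1 := by have := hx.2; linarith
      intro hq
      nlinarith
    have hbint : IntervalIntegrable (fun x : ℝ => 144 * c ^ (-(1/2) : ℝ) * (1 - x ^ 2)⁻¹)
        volume (-a) a := by
      apply ContinuousOn.intervalIntegrable
      apply ContinuousOn.mul continuousOn_const
      exact ContinuousOn.inv₀ (by fun_prop) hmid_ne
    have honeminus : (∫ x in (-a:ℝ)..a, 1/(1 - x)) = Real.log ((1+a)/(1-a)) := by
      have e1 := intervalIntegral.integral_comp_sub_left (a := -a) (b := a)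
        (fun y : ℝ => 1/y) 1
      beta_reduce at e1
      rw [e1, integral_one_div, show (1:ℝ) - -a = 1 + a by ring]
      rw [Set.uIcc_of_le (by linarith), Set.mem_Icc]
      push_neg
      intro h'
      linarith
    have honeplus : (∫ x in (-a:ℝ)..a, 1/(x + 1)) = Real.log ((1+a)/(1-a)) := by
      have e1 := intervalIntegral.integral_comp_add_right (a := -a) (b := a)
        (fun y : ℝ => 1/y) 1
      beta_reduce at e1
      rw [e1, show (-a:ℝ) + 1 = 1 - a by ring, show (a:ℝ) + 1 = 1 + a by ring,
        integral_one_div]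
      rw [Set.uIcc_of_le (by linarith), Set.mem_Icc]
      push_neg
      intro h'
      linarith
    have hcont1 : IntervalIntegrable (fun x : ℝ => 1/(1 - x)) volume (-a) a := by
      apply ContinuousOn.intervalIntegrable
      apply ContinuousOn.div continuousOn_const (by fun_prop)
      intro x hx
      rw [Set.uIcc_of_le (by linarith : -a ≤ a)] at hx
      have := hx.2; intro hcc; linarith
    have hcont2 : IntervalIntegrable (fun x : ℝ => 1/(x + 1)) volume (-a) a := by
      apply ContinuousOn.intervalIntegrable
      apply ContinuousOn.div continuousOn_const (by fun_prop)
      intro x hx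
      rw [Set.uIcc_of_le (by linarith : -a ≤ a)] at hx
      have := hx.1; intro hcc; linarith
    have hbval : (∫ x in (-a:ℝ)..a, 144 * c ^ (-(1/2) : ℝ) * (1 - x ^ 2)⁻¹)
        = 144 * c ^ (-(1/2) : ℝ) * Real.log ((1+a)/(1-a)) := by
      rw [intervalIntegral.integral_const_mul]
      congr 1
      have hcong : (∫ x in (-a:ℝ)..a, (1 - x ^ 2)⁻¹)
          = ∫ x in (-a:ℝ)..a, ((1/2) * (1/(1 - x)) + (1/2) * (1/(x + 1))) := by
        apply intervalIntegral.integral_congr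
        intro x hx
        rw [Set.uIcc_of_le (by linarith : -a ≤ a)] at hx
        have h1x : -1 < x := by have := hx.1; linarith
        have h2x : x < 1 := by have := hx.2; linarith
        have e1 : (1:ℝ) - x ≠ 0 := by intro hcc; linarith
        have e2 : x + (1:ℝ) ≠ 0 := by intro hcc; linarith
        have e3 : (1:ℝ) - x ^ 2 ≠ 0 := by
          rw [show (1:ℝ) - x ^ 2 = (1 - x) * (x + 1) by ring]
          exact mul_ne_zero e1 e2
        field_simp
        ring
      rw [hcong, intervalIntegral.integral_add (hcont1.const_mul _) (hcont2.const_mul _),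
        intervalIntegral.integral_const_mul, intervalIntegral.integral_const_mul,
        honeminus, honeplus]
      ring
    -- pointwise bounds
    have hb3 : ∀ x ∈ Set.Icc a 1, F x ≤ (1 - x) ^ (-(1/2) : ℝ) := by
      intro x hx
      rcases eq_or_lt_of_le hx.2 with rfl | hx1
      · simp only [hF]
        rw [show (1:ℝ) - 1^2 = 0 by norm_num, show (1:ℝ) - 1 = 0 by norm_num,
          Real.zero_rpow (by norm_num : (-(1/2):ℝ) ≠ 0), mul_zero]
      · have hx0 : 0 < 1 - x := by linarith
        have hxx : 0 < 1 - x ^ 2 := by nlinarith [ha2, hx.1]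
        have hh : (h x) ^ 2 ≤ 1 := by
          have := h1 x ⟨by linarith [hx.1], hx.2⟩
          nlinarith [abs_nonneg (h x), sq_abs (h x)]
        simp only [hF]
        calc (h x) ^ 2 * (1 - x ^ 2) ^ (-(1/2) : ℝ)
            ≤ 1 * (1 - x ^ 2) ^ (-(1/2) : ℝ) :=
              mul_le_mul_of_nonneg_right hh (Real.rpow_nonneg hxx.le _)
          _ = (1 - x ^ 2) ^ (-(1/2) : ℝ) := one_mul _
          _ ≤ (1 - x) ^ (-(1/2) : ℝ) := by
              apply Real.rpow_le_rpow_of_nonpos hx0 ?_ (by norm_num)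
              nlinarith [hx.1, ha2]
    have hb1 : ∀ x ∈ Set.Icc (-1:ℝ) (-a), F x ≤ (x + 1) ^ (-(1/2) : ℝ) := by
      intro x hx
      rcases eq_or_lt_of_le hx.1 with heq | hx1
      · simp only [hF, ← heq]
        rw [show (1:ℝ) - (-1)^2 = 0 by norm_num, show (-1:ℝ) + 1 = 0 by norm_num,
          Real.zero_rpow (by norm_num : (-(1/2):ℝ) ≠ 0), mul_zero]
      · have hx0 : 0 < x + 1 := by linarith
        have hxa : x ≤ -a := hx.2
        have hxx : 0 < 1 - x ^ 2 := by nlinarith [ha2]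
        have hh : (h x) ^ 2 ≤ 1 := by
          have := h1 x ⟨hx.1, by linarith [ha2]⟩
          nlinarith [abs_nonneg (h x), sq_abs (h x)]
        simp only [hF]
        calc (h x) ^ 2 * (1 - x ^ 2) ^ (-(1/2) : ℝ)
            ≤ 1 * (1 - x ^ 2) ^ (-(1/2) : ℝ) :=
              mul_le_mul_of_nonneg_right hh (Real.rpow_nonneg hxx.le _)
          _ = (1 - x ^ 2) ^ (-(1/2) : ℝ) := one_mul _
          _ ≤ (x + 1) ^ (-(1/2) : ℝ) := by
              apply Real.rpow_le_rpow_of_nonpos hx0 ?_ (by norm_num)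
              nlinarith [ha2]
    have hb2 : ∀ x ∈ Set.Icc (-a) a, F x ≤ 144 * c ^ (-(1/2) : ℝ) * (1 - x ^ 2)⁻¹ := by
      intro x hx
      have h1x : -1 < x := by have := hx.1; linarith
      have h2x : x < 1 := by have := hx.2; linarith
      have hxx : 0 < 1 - x ^ 2 := by nlinarith
      have key := h2 x ⟨h1x, h2x⟩
      have keysq : (1 - x ^ 2) ^ ((1/2) : ℝ) * (h x) ^ 2 ≤ 144 * c ^ (-(1/2) : ℝ) := by
        have hmm := mul_le_mul key key
          (mul_nonneg (Real.rpow_nonneg hxx.le _) (abs_nonneg _)) (by positivity)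
        calc (1 - x ^ 2) ^ ((1/2) : ℝ) * (h x) ^ 2
            = ((1 - x ^ 2) ^ ((1/4) : ℝ) * |h x|) * ((1 - x ^ 2) ^ ((1/4) : ℝ) * |h x|) := by
              rw [show ((1:ℝ)/2) = 1/4 + 1/4 by norm_num, Real.rpow_add hxx,
                ← sq_abs (h x)]
              ring
          _ ≤ (12 * c ^ (-(1/4) : ℝ)) * (12 * c ^ (-(1/4) : ℝ)) := hmm
          _ = 144 * c ^ (-(1/2) : ℝ) := by
              rw [show (-(1/2) : ℝ) = -(1/4) + -(1/4) by norm_num, Real.rpow_add hc0]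
              ring
      have hfe : F x = ((1 - x ^ 2) ^ ((1/2) : ℝ) * (h x) ^ 2) * (1 - x ^ 2)⁻¹ := by
        have huu : (1 - x ^ 2) ^ ((1/2) : ℝ) * (1 - x ^ 2)⁻¹ = (1 - x ^ 2) ^ (-(1/2) : ℝ) := by
          rw [show (1 - x ^ 2)⁻¹ = (1 - x ^ 2) ^ ((-1) : ℝ) from (Real.rpow_neg_one _).symm,
            ← Real.rpow_add hxx]
          norm_num
        simp only [hF]
        rw [← huu]
        ring
      rw [hfe]
      exact mul_le_mul_of_nonneg_right keysq (by positivity)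
    -- piecewise integral bounds
    have hS3 : (∫ x in (a:ℝ)..1, F x) ≤ 2 * (1/(n:ℝ)) ^ ((1/2) : ℝ) := by
      rw [← hrval]
      exact intervalIntegral.integral_mono_on (by linarith) hsub3 hrint hb3
    have hS1 : (∫ x in (-1:ℝ)..(-a), F x) ≤ 2 * (1/(n:ℝ)) ^ ((1/2) : ℝ) := by
      rw [← hlval]
      exact intervalIntegral.integral_mono_on (by linarith) hsub1 hlint hb1
    have hS2 : (∫ x in (-a:ℝ)..a, F x) ≤ 144 * c ^ (-(1/2) : ℝ) * Real.log ((1+a)/(1-a)) := by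
      rw [← hbval]
      exact intervalIntegral.integral_mono_on (by linarith) hsub2 hbint hb2
    -- log bound
    have hlogle : Real.log ((1+a)/(1-a)) ≤ Real.log c := by
      have e1 : (1+a)/(1-a) = 2*(n:ℝ) - 1 := by
        rw [ha, show (1:ℝ) - (1 - 1/(n:ℝ)) = 1/(n:ℝ) by ring,
          div_eq_iff (ne_of_gt hinv)]
        field_simp
        ring
      rw [e1]
      apply Real.log_le_log (by linarith)
      rw [hc]; linarith
    -- conversions
    have hrpc : c ^ (-(1/2) : ℝ) = (Real.sqrt c)⁻¹ := by
      rw [Real.rpow_neg hc0.le, Real.sqrt_eq_rpow]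
    have hrpn : (1/(n:ℝ)) ^ ((1/2) : ℝ) = (Real.sqrt (n:ℝ))⁻¹ := by
      rw [← Real.sqrt_eq_rpow, one_div, Real.sqrt_inv]
    have hsn0 : (0:ℝ) < Real.sqrt (n:ℝ) := Real.sqrt_pos.mpr hn0
    have hcmp : Real.sqrt c ≤ 2 * Real.sqrt (n:ℝ) := by
      have h4 : c ≤ 4 * (n:ℝ) := by rw [hc]; linarith
      calc Real.sqrt c ≤ Real.sqrt (4 * (n:ℝ)) := Real.sqrt_le_sqrt h4
        _ = 2 * Real.sqrt (n:ℝ) := by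
          rw [show (4:ℝ) * (n:ℝ) = 2^2 * (n:ℝ) by ring,
            Real.sqrt_mul (by positivity) (n:ℝ), Real.sqrt_sq (by norm_num)]
    have huv : (Real.sqrt (n:ℝ))⁻¹ ≤ 2 * (Real.sqrt c)⁻¹ := by
      have h1' : (2 * Real.sqrt (n:ℝ))⁻¹ ≤ (Real.sqrt c)⁻¹ := inv_anti₀ hs0 hcmp
      rw [mul_inv] at h1'
      calc (Real.sqrt (n:ℝ))⁻¹ = 2 * ((2:ℝ)⁻¹ * (Real.sqrt (n:ℝ))⁻¹) := by ring
        _ ≤ 2 * (Real.sqrt c)⁻¹ := by linarith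
    -- total
    have htot : (∫ x in (-1:ℝ)..1, F x) ≤
        4 * (Real.sqrt (n:ℝ))⁻¹ + 144 * (Real.sqrt c)⁻¹ * Real.log c := by
      rw [hsplit]
      have hmid : 144 * c ^ (-(1/2) : ℝ) * Real.log ((1+a)/(1-a))
          ≤ 144 * (Real.sqrt c)⁻¹ * Real.log c := by
        rw [hrpc]
        exact mul_le_mul_of_nonneg_left hlogle (by positivity)
      rw [hrpn] at hS1 hS3
      linarith
    have htot0 : (0:ℝ) ≤ 4 * (Real.sqrt (n:ℝ))⁻¹ + 144 * (Real.sqrt c)⁻¹ * Real.log c := by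
      positivity
    have hpi : (3:ℝ) < Real.pi := Real.pi_gt_three
    calc (1 / Real.pi) * ∫ x in (-1:ℝ)..1, F x
        ≤ (1 / Real.pi) * (4 * (Real.sqrt (n:ℝ))⁻¹ + 144 * (Real.sqrt c)⁻¹ * Real.log c) :=
          mul_le_mul_of_nonneg_left htot (by positivity)
      _ ≤ (1 / 3) * (4 * (Real.sqrt (n:ℝ))⁻¹ + 144 * (Real.sqrt c)⁻¹ * Real.log c) := by
          apply mul_le_mul_of_nonneg_right _ htot0
          rw [div_le_div_iff₀ Real.pi_pos (by norm_num)]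
          linarith
      _ ≤ 151 * Real.log c / Real.sqrt c := by
          have hv : (0:ℝ) ≤ (Real.sqrt c)⁻¹ := inv_nonneg.mpr hs0.le
          have ht : (Real.sqrt c)⁻¹ ≤ (Real.sqrt c)⁻¹ * Real.log c :=
            le_mul_of_one_le_right hv hLn
          rw [div_eq_mul_inv (151 * Real.log c) (Real.sqrt c)]
          linarith [huv, hv, ht]
  · rw [intervalIntegral.integral_undef hint, mul_zero]
    exact hRHS0
end
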